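/- A profile d* ∈ ∏_{i<N} [m, M] is a pure-strategy Nash equilibrium of the game (i.e., for every i and every y ∈ [m, M], U_i(d* with i-th coordinate y) ≤ U_i(d*)) if and only if for every i, the i-th coordinate d*_i minimizes the one-variable function y ↦ F(d* with i-th coordinate y) over [m, M], where F(d) = ε(d) − Σ_{i<N} (c_i/z_i)·d_i. -/

import Mathlib

open Real Finset

/-- Global model error: `ε(d) = exp(((1/N)·Σ_j (α·(L_j + d_j)^(−β) − δ) − 1)/ϱ)`. -/
noncomputable def epsGlob (N : ℕ) (α β δ ϱ : ℝ) (L d : Fin N → ℝ) : ℝ :=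
  Real.exp (((1 / (N : ℝ)) * ∑ j, (α * (L j + d j) ^ (-β) - δ) - 1) / ϱ)

/-- The weight `z_i = Σ_{j≠i} γ_{i,j}·(ξ − φ_j) − ψ_i`. -/
noncomputable def zWeight (N : ℕ) (ψ φ : Fin N → ℝ) (γ : Fin N → Fin N → ℝ) (ξ : ℝ)
    (i : Fin N) : ℝ :=
  (∑ j ∈ Finset.univ.erase i, γ i j * (ξ - φ j)) - ψ i

/-- Organization `i`'s utility:
`U_i(d) = ψ_i·(ε_0 − ε(d)) + Σ_{j≠i} (ξ − φ_j)·γ_{i,j}·Δ_i(d) − c_i·d_i − K_i`,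
where `Δ_i(d) = ε(d) − ε(d with i-th coordinate 0)`. -/
noncomputable def utility (N : ℕ) (α β δ ϱ : ℝ) (L c ψ φ K : Fin N → ℝ)
    (γ : Fin N → Fin N → ℝ) (ξ ε0 : ℝ) (i : Fin N) (d : Fin N → ℝ) : ℝ :=
  ψ i * (ε0 - epsGlob N α β δ ϱ L d)
    + ∑ j ∈ Finset.univ.erase i, (ξ - φ j) * γ i j *
        (epsGlob N α β δ ϱ L d - epsGlob N α β δ ϱ L (Function.update d i 0))
    - c i * d i - K i

/-- The potential function `F(d) = ε(d) − Σ_i (c_i/z_i)·d_i`. -/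
noncomputable def potential (N : ℕ) (α β δ ϱ : ℝ) (L c z : Fin N → ℝ)
    (d : Fin N → ℝ) : ℝ :=
  epsGlob N α β δ ϱ L d - ∑ i, (c i / z i) * d i

/-!
Up to terms that do not depend on `d_i`, organization `i`'s utility is `z_i · F(d)`: the
competition term only involves `ε(d)` and the baseline `ε_{−i}(d)`, and `z_i · (c_i/z_i) · d_i`
is the cost `c_i · d_i`. Hence `F` is a weighted potential of the game with weights `z_i`, and
since every `z_i` is negative, a unilateral deviation raises `U_i` exactly when it lowers `F`.
-/

open Function

section WeightedPotential

variable {ι X : Type*} [DecidableEq ι]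

def IsWeightedPotential (U : ι → (ι → X) → ℝ) (F : (ι → X) → ℝ) (w : ι → ℝ) : Prop :=
  ∀ i d y, U i (update d i y) - U i d = w i * (F (update d i y) - F d)

variable {U : ι → (ι → X) → ℝ} {F : (ι → X) → ℝ} {w : ι → ℝ}

theorem IsWeightedPotential.update_le_iff_of_neg (hF : IsWeightedPotential U F w) {i : ι}
    (hw : w i < 0) (d : ι → X) (y : X) :
    U i (update d i y) ≤ U i d ↔ F d ≤ F (update d i y) := by
  rw [← sub_nonpos, hF i d y, ← mul_zero (w i), mul_le_mul_left_of_neg hw, sub_nonneg]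

theorem IsWeightedPotential.forall_update_le_iff (hF : IsWeightedPotential U F w)
    (hw : ∀ i, w i < 0) (S : Set X) (d : ι → X) :
    (∀ i, ∀ y ∈ S, U i (update d i y) ≤ U i d) ↔ ∀ i, ∀ y ∈ S, F d ≤ F (update d i y) := by
  simp only [hF.update_le_iff_of_neg (hw _)]

end WeightedPotential

theorem sum_mul_update_sub {ι : Type*} [Fintype ι] [DecidableEq ι] (g d : ι → ℝ) (i : ι)
    (y : ℝ) : ∑ j, g j * update d i y j - ∑ j, g j * d j = g i * (y - d i) := by
  rw [← Finset.sum_sub_distrib, Finset.sum_eq_single i]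
  · simp [mul_sub]
  · intro j _ hj
    simp [hj]
  · simp

section Model

variable {N : ℕ} {ψ φ : Fin N → ℝ} {γ : Fin N → Fin N → ℝ} {ξ : ℝ}

theorem zWeight_neg (hψ : ∀ i, 0 < ψ i) (hγ : ∀ i j, γ i j ∈ Set.Icc (0 : ℝ) 1)
    (hξ : ∀ j, ξ ≤ φ j) (i : Fin N) : zWeight N ψ φ γ ξ i < 0 := by
  have hcompetition : ∑ j ∈ univ.erase i, γ i j * (ξ - φ j) ≤ 0 :=
    sum_nonpos fun j _ => mul_nonpos_of_nonneg_of_nonpos (hγ i j).1 (sub_nonpos.2 (hξ j))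
  rw [zWeight]
  linarith [hψ i]

theorem utility_eq (α β δ ϱ : ℝ) (L c K : Fin N → ℝ) (ε0 : ℝ) (i : Fin N) (d : Fin N → ℝ) :
    utility N α β δ ϱ L c ψ φ K γ ξ ε0 i d =
      ψ i * (ε0 - epsGlob N α β δ ϱ L d)
        + (zWeight N ψ φ γ ξ i + ψ i) *
            (epsGlob N α β δ ϱ L d - epsGlob N α β δ ϱ L (update d i 0))
        - c i * d i - K i := by
  simp only [utility, zWeight, sub_add_cancel, sum_mul]
  congr 3
  exact sum_congr rfl fun j _ => by ring

theorem isWeightedPotential_utility (α β δ ϱ : ℝ) (L c K : Fin N → ℝ) (ε0 : ℝ)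
    (hz : ∀ i, zWeight N ψ φ γ ξ i ≠ 0) :
    IsWeightedPotential (utility N α β δ ϱ L c ψ φ K γ ξ ε0)
      (potential N α β δ ϱ L c (zWeight N ψ φ γ ξ)) (zWeight N ψ φ γ ξ) := by
  intro i d y
  have hcost := sum_mul_update_sub (fun j => c j / zWeight N ψ φ γ ξ j) d i y
  have hci : zWeight N ψ φ γ ξ i * (c i / zWeight N ψ φ γ ξ i) = c i := mul_div_cancel₀ _ (hz i)
  simp only [utility_eq, potential, update_idem, update_self] at hcost ⊢
  linear_combination zWeight N ψ φ γ ξ i * hcost + (y - d i) * hci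

end Model

theorem nash_iff_coordinatewise_min_general (N : ℕ) (α β δ ϱ : ℝ)
    (L c ψ φ K : Fin N → ℝ)
    (hψ : ∀ i, 0 < ψ i)
    (γ : Fin N → Fin N → ℝ) (hγ : ∀ i j, γ i j ∈ Set.Icc (0 : ℝ) 1)
    (ξ : ℝ) (hξ : ∀ j, ξ ≤ φ j) (ε0 : ℝ) 
    (m M : ℝ)
    (dstar : Fin N → ℝ) :
    (∀ i : Fin N, ∀ y ∈ Set.Icc m M,
        utility N α β δ ϱ L c ψ φ K γ ξ ε0 i (Function.update dstar i y)
          ≤ utility N α β δ ϱ L c ψ φ K γ ξ ε0 i dstar)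
      ↔ (∀ i : Fin N, ∀ y ∈ Set.Icc m M,
          potential N α β δ ϱ L c (zWeight N ψ φ γ ξ) dstar
            ≤ potential N α β δ ϱ L c (zWeight N ψ φ γ ξ) (Function.update dstar i y)) := by
  have hz := zWeight_neg hψ hγ hξ
  exact (isWeightedPotential_utility α β δ ϱ L c K ε0 fun i => (hz i).ne).forall_update_le_iff
    hz _ dstar

/-- A profile `d*` in the box is a pure-strategy Nash equilibrium iff
each coordinate `d*_i` minimizes `y ↦ F(d* with i-th coordinate y)` over `[m, M]`. -/
theorem nash_iff_coordinatewise_min (N : ℕ) (hN : 1 ≤ N) (α β δ ϱ : ℝ) (hα : 0 < α) (hβ : 0 < β)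
    (hϱ : 0 < ϱ) (hδ : 0 ≤ δ) (L c ψ φ K : Fin N → ℝ)
    (hL : ∀ i, 0 < L i) (hc : ∀ i, 0 < c i) (hψ : ∀ i, 0 < ψ i) (hφ : ∀ j, 0 < φ j)
    (hK : ∀ i, 0 ≤ K i)
    (γ : Fin N → Fin N → ℝ) (hγ : ∀ i j, γ i j ∈ Set.Icc (0 : ℝ) 1)
    (ξ : ℝ) (hξ0 : 0 ≤ ξ) (hξ : ∀ j, ξ ≤ φ j) (ε0 : ℝ) 
    (m M : ℝ) (hm : 0 ≤ m) (hmM : m < M)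
    (dstar : Fin N → ℝ) (hdstar : ∀ i, dstar i ∈ Set.Icc m M) :
    (∀ i : Fin N, ∀ y ∈ Set.Icc m M,
        utility N α β δ ϱ L c ψ φ K γ ξ ε0 i (Function.update dstar i y)
          ≤ utility N α β δ ϱ L c ψ φ K γ ξ ε0 i dstar)
      ↔ (∀ i : Fin N, ∀ y ∈ Set.Icc m M,
          potential N α β δ ϱ L c (zWeight N ψ φ γ ξ) dstar
            ≤ potential N α β δ ϱ L c (zWeight N ψ φ γ ξ) (Function.update dstar i y)) :=
  nash_iff_coordinatewise_min_general N α β δ ϱ L c ψ φ K hψ γ hγ ξ hξ ε0 m M dstar
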